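/- arXiv:0705.0698 — 3 statements merged into one kernel-verified Lean document; each statement's English description precedes it below -/
import Mathlib

section
/- If r, s, u, v are positive integers and q > 1 is real, then 1/([u]_q^r [v]_q^s) = Σ_{a=0}^{r-1} Σ_{b=0}^{r-1-a} C(a+s-1; a, b) (1-q)^b q^{(s-1-b)u + a v} / ([u]_q^{r-a-b} [u+v]_q^{s+a}) + Σ_{a=0}^{s-1} Σ_{b=0}^{s-1-a} C(a+r-1; a, b) (1-q)^b q^{a u + (r-1-b)v} / ([v]_q^{s-a-b} [u+v]_q^{r+a}) − Σ_{j=1}^{min(r,s)} C(r+s-j-1; r-j, s-j) (1-q)^j q^{(s-j)u + (r-j)v} / [u+v]_q^{r+s-j}. -/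
/-!
With `x = q^u`, `y = q^v`, `X = [u]_q`, `Y = [v]_q`, `Z = [u+v]_q` and `ε = 1 - q` one has
`x + εX = 1`, `y + εY = 1` and `Z = X + Y - εXY`, and the identity holds for any elements of a
field related in this way (for `ε = 0` it is the classical partial-fraction decomposition of
`1 / (X^r Y^s)` over `X`, `Y` and `Z = X + Y`).

Writing `s = n + 1`, each of the three sums is a convolution over `a + k = r` of the factor
`C(a+n, a) y^a / Z^(n+1+a)` with a weight `w(n, k)`. Since `Z = xY + yX + εXY`, all four sides
`F(r, s)` of the identity satisfy `Z F(r+1, s+1) = x F(r+1, s) + y F(r, s+1) + ε F(r, s)`: for the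
sums this is Pascal's rule, once in `a` and once in the binomial index of the weights. The identity
then follows by induction from the cases `r = 1` and `s = 1`, which come down to a geometric sum.
-/

/-- The q-analog of a natural number: `[n]_q = (q^n - 1)/(q - 1)`. -/
noncomputable def qa (q : ℝ) (n : ℕ) : ℝ := (q ^ n - 1) / (q - 1)

open Finset

section PartialFractions

variable {K : Type*} [Field K]

def binomTerm (x ε : K) (n b : ℕ) : K := n.choose b * ε ^ b * x ^ (n - b)

lemma binomTerm_succ_zero (x ε : K) (n : ℕ) :
    binomTerm x ε (n + 1) 0 = x * binomTerm x ε n 0 := by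
  simp [binomTerm, pow_succ']

lemma binomTerm_succ_succ (x ε : K) (n b : ℕ) :
    binomTerm x ε (n + 1) (b + 1) = x * binomTerm x ε n (b + 1) + ε * binomTerm x ε n b := by
  unfold binomTerm
  rw [Nat.choose_succ_succ', Nat.add_sub_add_right]
  rcases lt_or_ge b n with hb | hb
  · rw [show n - b = n - (b + 1) + 1 by omega]
    push_cast
    ring
  · rw [Nat.choose_eq_zero_of_lt (by omega : n < b + 1)]
    push_cast
    ring

/-- The terms with a negative power of `X` in the expansion of `(x + εX)^n / X^k`. -/
def xPart (x X ε : K) (n k : ℕ) : K := ∑ b ∈ range k, binomTerm x ε n b / X ^ (k - b)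

lemma xPart_succ_succ (x X ε : K) (n k : ℕ) :
    xPart x X ε (n + 1) (k + 1) = x * xPart x X ε n (k + 1) + ε * xPart x X ε n k := by
  simp only [xPart, sum_range_succ' _ k, binomTerm_succ_succ, binomTerm_succ_zero, mul_sum,
    mul_add, add_div, sum_add_distrib, mul_div_assoc, Nat.add_sub_add_right, Nat.sub_zero]
  ring

lemma xPart_zero_succ (x X ε : K) (k : ℕ) : xPart x X ε 0 (k + 1) = 1 / X ^ (k + 1) := by
  simp [xPart, sum_range_succ', binomTerm]

def epsPart (x ε : K) : ℕ → ℕ → K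
  | _, 0 => 0
  | n, k + 1 => ε * binomTerm x ε n k

lemma epsPart_succ_succ (x ε : K) (n k : ℕ) :
    epsPart x ε (n + 1) (k + 1) = x * epsPart x ε n (k + 1) + ε * epsPart x ε n k := by
  cases k with
  | zero => simp only [epsPart, binomTerm_succ_zero, mul_zero, add_zero]; ring
  | succ k => simp only [epsPart, binomTerm_succ_succ]; ring

lemma epsPart_eq_zero (x ε : K) {n k : ℕ} (hk : k = 0 ∨ n + 1 < k) : epsPart x ε n k = 0 := by
  rcases k with _ | k
  · rfl
  · simp [epsPart, binomTerm, Nat.choose_eq_zero_of_lt (by omega : n < k)]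

/-- Here and below the index `n` stands for the exponent `s - 1` of the theorem. -/
def zTerm (y Z : K) (n a : ℕ) : K := (a + n).choose a * y ^ a / Z ^ (n + 1 + a)

variable {y Z : K}

lemma mul_zTerm_succ_zero (hZ : Z ≠ 0) (n : ℕ) : Z * zTerm y Z (n + 1) 0 = zTerm y Z n 0 := by
  simp only [zTerm, zero_add, Nat.choose_zero_right, pow_zero, add_zero, pow_succ]
  field_simp

lemma mul_zTerm_succ_succ (hZ : Z ≠ 0) (n a : ℕ) :
    Z * zTerm y Z (n + 1) (a + 1) = zTerm y Z n (a + 1) + y * zTerm y Z (n + 1) a := by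
  simp only [zTerm]
  rw [show a + 1 + (n + 1) = a + (n + 1) + 1 by omega, Nat.choose_succ_succ',
    show a + (n + 1) = a + 1 + n by omega]
  push_cast
  field_simp
  ring

def zConv (y Z : K) (w : ℕ → ℕ → K) (r n : ℕ) : K :=
  ∑ p ∈ antidiagonal r, zTerm y Z n p.1 * w n p.2

lemma mul_zConv_succ_succ {x ε : K} (hZ : Z ≠ 0) {w : ℕ → ℕ → K} (hw₀ : ∀ n, w n 0 = 0)
    (hw : ∀ n k, w (n + 1) (k + 1) = x * w n (k + 1) + ε * w n k) (r n : ℕ) :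
    Z * zConv y Z w (r + 1) (n + 1) =
      x * zConv y Z w (r + 1) n + y * zConv y Z w r (n + 1) + ε * zConv y Z w r n := by
  have pascal_a : Z * zConv y Z w (r + 1) (n + 1) =
      ∑ p ∈ antidiagonal (r + 1), zTerm y Z n p.1 * w (n + 1) p.2 + y * zConv y Z w r (n + 1) := by
    simp only [zConv, mul_sum, Nat.sum_antidiagonal_succ, mul_add, ← mul_assoc,
      mul_zTerm_succ_zero hZ, mul_zTerm_succ_succ hZ, add_mul, sum_add_distrib]
    ring
  have pascal_k : ∑ p ∈ antidiagonal (r + 1), zTerm y Z n p.1 * w (n + 1) p.2 =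
      x * zConv y Z w (r + 1) n + ε * zConv y Z w r n := by
    simp only [zConv, mul_sum, Nat.sum_antidiagonal_succ', hw₀, hw, mul_zero, zero_add, mul_add,
      sum_add_distrib]
    congr 1 <;> refine sum_congr rfl fun p _ => by ring
  rw [pascal_a, pascal_k]
  ring

lemma zConv_one {w : ℕ → ℕ → K} (hw₀ : ∀ n, w n 0 = 0) (n : ℕ) :
    zConv y Z w 1 n = w n 1 / Z ^ (n + 1) := by
  simp [zConv, Nat.sum_antidiagonal_succ, zTerm, hw₀, div_mul_eq_mul_div]

lemma zConv_xPart_zero {x X ε : K} (hX : X ≠ 0) (hY : Y ≠ 0) (hZ : Z ≠ 0) (hZ' : Z = y * X + Y)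
    (r : ℕ) :
    zConv y Z (xPart x X ε) r 0 = (1 / X ^ r - y ^ r / Z ^ r) / Y := by
  induction r with
  | zero => simp [zConv, xPart]
  | succ r ih =>
    have step : zConv y Z (xPart x X ε) (r + 1) 0 =
        1 / (Z * X ^ (r + 1)) + y / Z * zConv y Z (xPart x X ε) r 0 := by
      simp only [zConv, Nat.sum_antidiagonal_succ, xPart_zero_succ, mul_sum]
      congr 1
      · simp only [zTerm, add_zero, Nat.choose_self, Nat.cast_one, pow_zero, mul_one, zero_add]
        field_simp
      · refine sum_congr rfl fun p _ => ?_
        simp only [zTerm, add_zero, Nat.choose_self, Nat.cast_one, one_mul]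
        field_simp
        ring
    rw [step, ih]
    field_simp
    linear_combination (-(X ^ r * Z * Z ^ (r * 2))) * hZ'

lemma zConv_epsPart_zero {x ε : K} (r : ℕ) :
    zConv y Z (epsPart x ε) (r + 1) 0 = ε * y ^ r / Z ^ (r + 1) := by
  rw [zConv, sum_eq_single_of_mem (r, 1) (by simp)]
  · simp only [zTerm, epsPart, binomTerm, add_zero, zero_add, Nat.choose_self, Nat.sub_self,
      Nat.cast_one, pow_zero, one_mul, mul_one]
    ring
  · rintro ⟨a, k⟩ hp hne
    rw [epsPart_eq_zero x ε, mul_zero]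
    simp only [HasAntidiagonal.mem_antidiagonal] at hp
    simp only [ne_eq, Prod.mk.injEq] at hne
    omega

variable {x X Y ε : K}

theorem zConv_decomposition (hX : X ≠ 0) (hY : Y ≠ 0) (hZ₀ : Z ≠ 0) (hx : x + ε * X = 1)
    (hy : y + ε * Y = 1) (hZ : Z = X + Y - ε * X * Y) (m n : ℕ) :
    zConv y Z (xPart x X ε) (m + 1) n + zConv x Z (xPart y Y ε) (n + 1) m
      - zConv y Z (epsPart x ε) (m + 1) n = 1 / (X ^ (m + 1) * Y ^ (n + 1)) := by
  have hZx : Z = x * Y + X := by linear_combination hZ - Y * hx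
  have hZy : Z = y * X + Y := by linear_combination hZ - X * hy
  have hZxy : Z = x * Y + y * X + ε * X * Y := by linear_combination hZ - Y * hx - X * hy
  have xPart_zero (x X : K) (n : ℕ) : xPart x X ε n 0 = 0 := sum_range_zero _
  have epsPart_zero (x : K) (n : ℕ) : epsPart x ε n 0 = 0 := rfl
  induction m generalizing n with
  | zero =>
    rw [zConv_one (xPart_zero x X), zConv_one (epsPart_zero x), zConv_xPart_zero hY hX hZ₀ hZx]
    simp only [xPart, epsPart, binomTerm, sum_range_one, Nat.choose_zero_right, Nat.sub_zero,
      Nat.cast_one, pow_zero, pow_one, one_mul, mul_one]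
    field_simp
    linear_combination (-(x ^ n * Y ^ (n + 1) * X)) * hx
  | succ m ih =>
    induction n with
    | zero =>
      rw [zConv_one (xPart_zero y Y), zConv_epsPart_zero, zConv_xPart_zero hX hY hZ₀ hZy]
      simp only [xPart, binomTerm, sum_range_one, Nat.choose_zero_right, Nat.sub_zero,
        Nat.cast_one, pow_zero, pow_one, one_mul, mul_one]
      field_simp
      linear_combination (-(X ^ (m + 2) * Y * y ^ (m + 1))) * hy
    | succ n ihn =>
      have hX' := mul_zConv_succ_succ (y := y) hZ₀ (xPart_zero x X) (xPart_succ_succ x X ε)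
        (m + 1) n
      have hY' := mul_zConv_succ_succ (y := x) hZ₀ (xPart_zero y Y) (xPart_succ_succ y Y ε)
        (n + 1) m
      have hε' := mul_zConv_succ_succ (y := y) hZ₀ (epsPart_zero x) (epsPart_succ_succ x ε)
        (m + 1) n
      have target : Z * (1 / (X ^ (m + 2) * Y ^ (n + 2))) = x * (1 / (X ^ (m + 2) * Y ^ (n + 1)))
          + y * (1 / (X ^ (m + 1) * Y ^ (n + 2))) + ε * (1 / (X ^ (m + 1) * Y ^ (n + 1))) := by
        rw [hZxy]
        field_simp
        ring
      apply mul_left_cancel₀ hZ₀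
      linear_combination hX' + hY' - hε' + x * ihn + y * ih (n + 1) + ε * ih n - target

lemma zConv_xPart_eq_sum (r : ℕ) {s : ℕ} (hs : 0 < s) :
    zConv y Z (xPart x X ε) r (s - 1) =
      ∑ a ∈ range r, ∑ b ∈ range (r - a),
        ((a + s - 1).choose a * (s - 1).choose b : K) * ε ^ b * (x ^ (s - 1 - b) * y ^ a) /
          (X ^ (r - a - b) * Z ^ (s + a)) := by
  rw [zConv, Nat.sum_antidiagonal_eq_sum_range_succ_mk,
    sum_range_succ, Nat.sub_self, xPart, sum_range_zero, mul_zero, add_zero]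
  refine sum_congr rfl fun a _ => ?_
  rw [xPart, mul_sum]
  refine sum_congr rfl fun b _ => ?_
  rw [zTerm, binomTerm, show a + (s - 1) = a + s - 1 by omega, show s - 1 + 1 + a = s + a by omega]
  ring

lemma zConv_epsPart_eq_sum (r : ℕ) {s : ℕ} (hs : 0 < s) :
    zConv y Z (epsPart x ε) r (s - 1) =
      ∑ j ∈ Icc 1 (min r s),
        ((r + s - j - 1).choose (r - j) * (s - 1).choose (s - j) : K) * ε ^ j *
          (x ^ (s - j) * y ^ (r - j)) / Z ^ (r + s - j) := by
  rw [zConv, ← Nat.sum_antidiagonal_swap, Nat.sum_antidiagonal_eq_sum_range_succ_mk]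
  have hsub : Icc 1 (min r s) ⊆ range (r + 1) := fun j hj => by
    simp only [mem_Icc] at hj
    simp only [mem_range]
    omega
  rw [← sum_subset hsub fun j hjr hj => ?_]
  · refine sum_congr rfl fun j hj => ?_
    simp only [mem_Icc] at hj
    obtain ⟨k, rfl⟩ : ∃ k, j = k + 1 := ⟨j - 1, by omega⟩
    simp only [Prod.swap_prod_mk, zTerm, epsPart, binomTerm]
    rw [show r + s - (k + 1) - 1 = r - (k + 1) + (s - 1) by omega,
      show s - 1 + 1 + (r - (k + 1)) = r + s - (k + 1) by omega,
      show s - (k + 1) = s - 1 - k by omega, Nat.choose_symm (by omega : k ≤ s - 1)]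
    ring
  · simp only [mem_range] at hjr
    simp only [mem_Icc, not_and_or, not_le] at hj
    rw [Prod.swap_prod_mk, epsPart_eq_zero x ε (by omega), mul_zero]

theorem one_div_pow_mul_pow_eq_sum (hX : X ≠ 0) (hY : Y ≠ 0) (hZ₀ : Z ≠ 0) (hx : x + ε * X = 1)
    (hy : y + ε * Y = 1) (hZ : Z = X + Y - ε * X * Y) {r s : ℕ} (hr : 0 < r) (hs : 0 < s) :
    1 / (X ^ r * Y ^ s) =
      (∑ a ∈ range r, ∑ b ∈ range (r - a),
        ((a + s - 1).choose a * (s - 1).choose b : K) * ε ^ b * (x ^ (s - 1 - b) * y ^ a) /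
          (X ^ (r - a - b) * Z ^ (s + a)))
      + (∑ a ∈ range s, ∑ b ∈ range (s - a),
        ((a + r - 1).choose a * (r - 1).choose b : K) * ε ^ b * (x ^ a * y ^ (r - 1 - b)) /
          (Y ^ (s - a - b) * Z ^ (r + a)))
      - (∑ j ∈ Icc 1 (min r s),
        ((r + s - j - 1).choose (r - j) * (s - 1).choose (s - j) : K) * ε ^ j *
          (x ^ (s - j) * y ^ (r - j)) / Z ^ (r + s - j)) := by
  rw [← zConv_xPart_eq_sum r hs, ← zConv_epsPart_eq_sum r hs]
  simp only [mul_comm (x ^ _) (y ^ _)]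
  rw [← zConv_xPart_eq_sum s hr]
  obtain ⟨m, rfl⟩ := Nat.exists_eq_add_one_of_ne_zero hr.ne'
  obtain ⟨n, rfl⟩ := Nat.exists_eq_add_one_of_ne_zero hs.ne'
  exact (zConv_decomposition hX hY hZ₀ hx hy hZ m n).symm

end PartialFractions

lemma pow_add_mul_qa (q : ℝ) (n : ℕ) : q ^ n + (1 - q) * qa q n = 1 := by
  rcases eq_or_ne q 1 with rfl | hq
  · simp [qa]
  · rw [qa]
    field_simp [sub_ne_zero.mpr hq]
    ring

lemma qa_add (q : ℝ) (m n : ℕ) : qa q (m + n) = qa q m + qa q n - (1 - q) * qa q m * qa q n := by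
  rcases eq_or_ne q 1 with rfl | hq
  · simp [qa]
  · simp only [qa]
    field_simp [sub_ne_zero.mpr hq]
    ring

lemma qa_pos {q : ℝ} (hq : 1 < q) {n : ℕ} (hn : 0 < n) : 0 < qa q n :=
  div_pos (sub_pos.mpr (one_lt_pow₀ hq hn.ne')) (sub_pos.mpr hq)

theorem stmt1 (q : ℝ) (hq : 1 < q) (r s u v : ℕ)
    (hr : 0 < r) (hs : 0 < s) (hu : 0 < u) (hv : 0 < v) :
    1 / (qa q u ^ r * qa q v ^ s) =
      (∑ a ∈ Finset.range r, ∑ b ∈ Finset.range (r - a),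
        ((a + s - 1).choose a * (s - 1).choose b : ℝ) * (1 - q) ^ b *
          q ^ ((s - 1 - b) * u + a * v) /
            (qa q u ^ (r - a - b) * qa q (u + v) ^ (s + a)))
      + (∑ a ∈ Finset.range s, ∑ b ∈ Finset.range (s - a),
        ((a + r - 1).choose a * (r - 1).choose b : ℝ) * (1 - q) ^ b *
          q ^ (a * u + (r - 1 - b) * v) /
            (qa q v ^ (s - a - b) * qa q (u + v) ^ (r + a)))
      - (∑ j ∈ Finset.Icc 1 (min r s),
        ((r + s - j - 1).choose (r - j) * (s - 1).choose (s - j) : ℝ) * (1 - q) ^ j *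
          q ^ ((s - j) * u + (r - j) * v) / qa q (u + v) ^ (r + s - j)) := by
  have key := one_div_pow_mul_pow_eq_sum (qa_pos hq hu).ne' (qa_pos hq hv).ne'
    (qa_pos hq (by omega : 0 < u + v)).ne' (pow_add_mul_qa q u) (pow_add_mul_qa q v)
    (qa_add q u v) hr hs
  simpa only [← pow_mul', ← pow_add] using key
end

section
/- If r and s are integers with r ≥ 2 and s ≥ 2, then ζ(r)·ζ(s) = Σ_{a=0}^{r-1} C(a+s-1, s-1) ζ(s+a, r-a) + Σ_{a=0}^{s-1} C(a+r-1, r-1) ζ(r+a, s-a), where ζ(p,q) := Σ_{m>n≥1} m^{-p} n^{-q} and ζ is the Riemann zeta function. -/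
/-!
For `x, y ≠ 0` with `x + y ≠ 0` there is the partial fraction decomposition
`1 / (x^r y^s) = ∑_{a<r} C(s-1+a, a) / ((x+y)^(s+a) x^(r-a)) + (the same with (r, x) ↔ (s, y))`,
obtained by induction on `r + s` from `(x + y) / (x^r y^s) = 1 / (x^(r-1) y^s) + 1 / (x^r y^(s-1))`
and Pascal's rule. Substituting `x = m`, `y = n` and summing over all `m, n ≥ 1` (every term is
nonnegative, so the sums may be rearranged) turns the left side into `ζ(r) ζ(s)` and the terms
`1 / ((m+n)^(s+a) m^(r-a))` into `ζ(s+a, r-a)`.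
-/

/-- `zeta k = Σ_{n≥1} n^{-k}`. -/
noncomputable def zeta (k : ℕ) : ℝ := ∑' n : ℕ, 1 / ((n : ℝ) + 1) ^ k

/-- `zeta2 p q = Σ_{m>n≥1} m^{-p} n^{-q}`. -/
noncomputable def zeta2 (p q : ℕ) : ℝ :=
  ∑' (i : ℕ) (j : ℕ), 1 / (((i : ℝ) + (j : ℝ) + 2) ^ p * ((j : ℝ) + 1) ^ q)

open Finset

section PartialFractions

variable {K : Type*} [Field K]

/-- `s.multichoose a = (s + a - 1).choose a` vanishes for `s = 0 < a`, which makes the partial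
fraction identity below hold as soon as one of the two exponents is nonzero. -/
def partialFracSum (r s : ℕ) (x y : K) : K :=
  ∑ a ∈ range r, (s.multichoose a : K) / ((x + y) ^ (s + a) * x ^ (r - a))

@[simp]
lemma partialFracSum_zero_left (s : ℕ) (x y : K) : partialFracSum 0 s x y = 0 := by
  simp [partialFracSum]

lemma partialFracSum_zero_right {r : ℕ} (hr : r ≠ 0) (x y : K) :
    partialFracSum r 0 x y = 1 / x ^ r := by
  obtain ⟨r, rfl⟩ := Nat.exists_eq_succ_of_ne_zero hr
  simp [partialFracSum, sum_range_succ']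

lemma partialFracSum_succ_succ_mul (r s : ℕ) {x y : K} (hxy : x + y ≠ 0) :
    partialFracSum (r + 1) (s + 1) x y * (x + y) =
      partialFracSum r (s + 1) x y + partialFracSum (r + 1) s x y := by
  have cancel (c D : K) (n : ℕ) :
      c / ((x + y) ^ (n + 1) * D) * (x + y) = c / ((x + y) ^ n * D) := by
    rw [pow_succ, mul_right_comm, div_mul_eq_mul_div, mul_div_mul_right _ _ hxy]
  simp only [partialFracSum, sum_mul]
  rw [sum_range_succ', sum_range_succ' _ r, ← add_assoc, ← sum_add_distrib]
  congr 1
  · refine sum_congr rfl fun a _ => ?_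
    rw [Nat.multichoose_succ_succ, Nat.cast_add, add_div, add_mul,
      show s + 1 + (a + 1) = s + (a + 1) + 1 by omega, cancel, cancel, add_comm,
      show s + (a + 1) = s + 1 + a by omega, show r + 1 - (a + 1) = r - a by omega]
  · simp only [Nat.multichoose_zero_right, add_zero]
    exact cancel _ _ s

theorem one_div_pow_mul_pow_eq_partialFracSum {x y : K} (hx : x ≠ 0) (hy : y ≠ 0)
    (hxy : x + y ≠ 0) (r s : ℕ) (hrs : r + s ≠ 0) :
    1 / (x ^ r * y ^ s) = partialFracSum r s x y + partialFracSum s r y x := by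
  induction r generalizing s with
  | zero =>
    simp [partialFracSum_zero_right (show s ≠ 0 by omega)]
  | succ r ihr =>
    induction s with
    | zero => simp [partialFracSum_zero_right (Nat.succ_ne_zero r)]
    | succ s ihs =>
      have hyx : y + x ≠ 0 := by rwa [add_comm]
      apply mul_right_cancel₀ hxy
      rw [add_mul, partialFracSum_succ_succ_mul r s hxy, add_comm x y,
        partialFracSum_succ_succ_mul s r hyx]
      calc 1 / (x ^ (r + 1) * y ^ (s + 1)) * (y + x)
          = 1 / (x ^ r * y ^ (s + 1)) + 1 / (x ^ (r + 1) * y ^ s) := by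
            field_simp
            ring
        _ = _ := by
          rw [ihr (s + 1) (by omega), ihs (by omega)]
          ring

end PartialFractions

lemma Nat.multichoose_eq_choose_pred {n : ℕ} (hn : n ≠ 0) (k : ℕ) :
    n.multichoose k = (k + n - 1).choose (n - 1) := by
  obtain ⟨n, rfl⟩ := Nat.exists_eq_succ_of_ne_zero hn
  rw [Nat.multichoose_eq, show n + 1 + k - 1 = k + n by omega,
    show k + (n + 1) - 1 = k + n by omega, Nat.add_one_sub_one, Nat.choose_symm_add]

lemma partialFracSum_nonneg {K : Type*} [Field K] [LinearOrder K] [IsStrictOrderedRing K]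
    (r s : ℕ) {x y : K} (hx : 0 ≤ x) (hy : 0 ≤ y) : 0 ≤ partialFracSum r s x y := by
  unfold partialFracSum
  positivity

lemma Summable.tsum_finsetSum_of_nonneg {ι β : Type*} {s : Finset ι} {f : ι → β → ℝ}
    (hf : ∀ i ∈ s, 0 ≤ f i) (h : Summable fun b => ∑ i ∈ s, f i b) :
    ∑' b, ∑ i ∈ s, f i b = ∑ i ∈ s, ∑' b, f i b :=
  Summable.tsum_finsetSum fun i hi =>
    h.of_nonneg_of_le (hf i hi) fun b => single_le_sum (fun j hj => hf j hj b) hi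

noncomputable def zeta2Summand (p q : ℕ) (z : ℕ × ℕ) : ℝ :=
  1 / (((z.1 : ℝ) + z.2 + 2) ^ p * ((z.2 : ℝ) + 1) ^ q)

lemma zeta2_eq_tsum {p q : ℕ} (h : Summable (zeta2Summand p q)) :
    zeta2 p q = ∑' z, zeta2Summand p q z :=
  (h.tsum_prod' h.prod_factor).symm

lemma summable_one_div_nat_add_one_pow {k : ℕ} (hk : 2 ≤ k) :
    Summable fun n : ℕ => 1 / ((n : ℝ) + 1) ^ k := by
  simpa using (summable_nat_add_iff 1).2 (Real.summable_one_div_nat_pow.2 (by omega : 1 < k))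

lemma hasSum_one_div_pow_mul_pow {r s : ℕ} (hr : 2 ≤ r) (hs : 2 ≤ s) :
    HasSum (fun z : ℕ × ℕ => 1 / (((z.1 : ℝ) + 1) ^ r * ((z.2 : ℝ) + 1) ^ s))
      (zeta r * zeta s) := by
  have hr' := summable_one_div_nat_add_one_pow hr
  have hs' := summable_one_div_nat_add_one_pow hs
  have hprod := hr'.mul_of_nonneg hs' (fun n => by positivity) (fun n => by positivity)
  simp only [← one_div_mul_one_div]
  rw [zeta, zeta, hr'.tsum_mul_tsum hs' hprod]
  exact hprod.hasSum

lemma partialFracSum_nat_add_one (r s m n : ℕ) :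
    partialFracSum r s ((m : ℝ) + 1) ((n : ℝ) + 1) =
      ∑ a ∈ range r, (s.multichoose a : ℝ) * zeta2Summand (s + a) (r - a) (n, m) := by
  refine sum_congr rfl fun a _ => ?_
  rw [zeta2Summand, mul_one_div]
  congr 3
  ring

lemma hasSum_partialFracSum {r s : ℕ} (hs : s ≠ 0)
    (h : Summable fun z : ℕ × ℕ => partialFracSum r s ((z.2 : ℝ) + 1) ((z.1 : ℝ) + 1)) :
    HasSum (fun z : ℕ × ℕ => partialFracSum r s ((z.2 : ℝ) + 1) ((z.1 : ℝ) + 1))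
      (∑ a ∈ range r, ((a + s - 1).choose (s - 1) : ℝ) * zeta2 (s + a) (r - a)) := by
  simp only [partialFracSum_nat_add_one, Nat.multichoose_eq_choose_pred hs] at h ⊢
  have hnonneg : ∀ a ∈ range r, 0 ≤ fun z : ℕ × ℕ =>
      ((a + s - 1).choose (s - 1) : ℝ) * zeta2Summand (s + a) (r - a) (z.1, z.2) :=
    fun a _ z => by unfold zeta2Summand; positivity
  convert h.hasSum using 1
  rw [h.tsum_finsetSum_of_nonneg hnonneg]
  refine sum_congr rfl fun a ha => ?_
  have hc : ((a + s - 1).choose (s - 1) : ℝ) ≠ 0 := by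
    exact_mod_cast (Nat.choose_pos (by omega)).ne'
  have hterm := h.of_nonneg_of_le (hnonneg a ha) fun z =>
    single_le_sum (fun j hj => hnonneg j hj z) ha
  rw [tsum_mul_left, zeta2_eq_tsum ((summable_mul_left_iff hc).1 hterm)]

theorem stmt6 (r s : ℕ) (hr : 2 ≤ r) (hs : 2 ≤ s) :
    zeta r * zeta s =
      (∑ a ∈ Finset.range r, ((a + s - 1).choose (s - 1) : ℝ) * zeta2 (s + a) (r - a))
      + (∑ a ∈ Finset.range s, ((a + r - 1).choose (r - 1) : ℝ) * zeta2 (r + a) (s - a)) := by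
  set G₁ : ℕ × ℕ → ℝ := fun z => partialFracSum r s ((z.1 : ℝ) + 1) ((z.2 : ℝ) + 1)
  set G₂ : ℕ × ℕ → ℝ := fun z => partialFracSum s r ((z.2 : ℝ) + 1) ((z.1 : ℝ) + 1)
  have hF : HasSum (G₁ + G₂) (zeta r * zeta s) := by
    convert hasSum_one_div_pow_mul_pow hr hs using 1
    funext z
    exact (one_div_pow_mul_pow_eq_partialFracSum (by positivity) (by positivity)
      (by positivity) r s (by omega)).symm
  have h₁ : 0 ≤ G₁ := fun z => partialFracSum_nonneg r s (by positivity) (by positivity)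
  have h₂ : 0 ≤ G₂ := fun z => partialFracSum_nonneg s r (by positivity) (by positivity)
  have hG₁ : HasSum G₁
      (∑ a ∈ range r, ((a + s - 1).choose (s - 1) : ℝ) * zeta2 (s + a) (r - a)) := by
    rw [← (Equiv.prodComm ℕ ℕ).hasSum_iff]
    refine hasSum_partialFracSum (by omega) (((Equiv.prodComm ℕ ℕ).summable_iff (f := G₁)).2 ?_)
    exact hF.summable.of_nonneg_of_le h₁ fun z => le_add_of_nonneg_right (h₂ z)
  have hG₂ : HasSum G₂
      (∑ a ∈ range s, ((a + r - 1).choose (r - 1) : ℝ) * zeta2 (r + a) (s - a)) :=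
    hasSum_partialFracSum (by omega)
      (hF.summable.of_nonneg_of_le h₂ fun z => le_add_of_nonneg_left (h₁ z))
  exact hF.unique (hG₁.add hG₂)
end

section
/- For every integer s > 1, Euler's formula ζ(s,1) = (s/2)·ζ(s+1) − (1/2)·Σ_{k=2}^{s-1} ζ(k) ζ(s+1−k) holds, where ζ(s,1) := Σ_{m>n≥1} m^{-s} n^{-1}. -/
/-!
Splitting the product of two series along the diagonal gives the stuffle relation
`ζ(k) ζ(l) = ζ(k + l) + ζ(k, l) + ζ(l, k)`. Writing `m = x + y`, `n = y`, the partial fraction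
identity `∑_{k=2}^{s-1} m⁻ᵏ n^{k-s-1} = 1 / (x m n^{s-1}) - 1 / (x n m^{s-1})` turns
`∑_k ζ(k, s + 1 - k)` into two double sums. Since `1 / (x n) = (1 / x + 1 / n) / m`, the second one
is `2 ζ(s, 1)`; in the first the sum over `x` telescopes to `H_n / n`, and
`∑_n H_n n^{-s} = ζ(s + 1) + ζ(s, 1)`. So `∑_k ζ(k, s + 1 - k) = ζ(s + 1) - ζ(s, 1)`, and summing
the stuffle relation over `k` gives Euler's formula.
-/

open Finset Filter Topology Function

namespace EulerZeta2

noncomputable def natProdEquivDiagSumTriangles : ℕ ⊕ (ℕ × ℕ) ⊕ (ℕ × ℕ) ≃ ℕ × ℕ :=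
  Equiv.ofBijective
    (Sum.elim (fun n => (n, n))
      (Sum.elim (fun q => (q.1 + q.2 + 1, q.2)) (fun q => (q.2, q.1 + q.2 + 1)))) <| by
    constructor
    · rintro (a | ⟨a, b⟩ | ⟨a, b⟩) (c | ⟨c, d⟩ | ⟨c, d⟩) h <;>
        simp only [Sum.elim_inl, Sum.elim_inr, Prod.mk.injEq] at h <;>
        first | (simp only [Sum.inl.injEq, Sum.inr.injEq, Prod.mk.injEq]; omega) | omega
    · rintro ⟨m, n⟩
      rcases lt_trichotomy m n with h | rfl | h
      · exact ⟨.inr (.inr (n - m - 1, m)), by simp; omega⟩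
      · exact ⟨.inl m, rfl⟩
      · exact ⟨.inr (.inl (m - n - 1, n)), by simp; omega⟩

lemma tsum_eq_tsum_diag_add_tsum_triangles {E : Type*} [NormedAddCommGroup E] [CompleteSpace E]
    {f : ℕ × ℕ → E} (hf : Summable f) :
    ∑' p, f p = ∑' n, f (n, n) +
      (∑' q : ℕ × ℕ, f (q.1 + q.2 + 1, q.2) + ∑' q : ℕ × ℕ, f (q.2, q.1 + q.2 + 1)) := by
  set e := natProdEquivDiagSumTriangles
  have he : Summable (f ∘ e) := e.summable_iff.2 hf
  have hr : Summable (f ∘ e ∘ Sum.inr) := he.comp_injective Sum.inr_injective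
  rw [← e.tsum_eq]
  exact (Summable.tsum_sum (f := f ∘ e) (he.comp_injective Sum.inl_injective) hr).trans
    (congrArg _ (Summable.tsum_sum (f := f ∘ e ∘ Sum.inr)
      (hr.comp_injective Sum.inl_injective) (hr.comp_injective Sum.inr_injective)))

lemma hasSum_sum_range_of_hasSum {M : Type*} [AddCommMonoid M] [TopologicalSpace M]
    [ContinuousAdd M] [RegularSpace M] {f : ℕ × ℕ → M} {a : M}
    (hf : HasSum (fun q : ℕ × ℕ => f (q.1 + q.2 + 1, q.2)) a) :
    HasSum (fun n => ∑ t ∈ range n, f (n, t)) a := by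
  have hinj : Injective fun q : ℕ × ℕ => (q.1 + q.2 + 1, q.2) := fun q r h => by
    simp only [Prod.mk.injEq] at h
    ext <;> omega
  set g : ℕ × ℕ → M := fun p => if p.2 < p.1 then f p else 0
  have hg : HasSum g a := by
    refine (hinj.hasSum_iff fun p hp => if_neg fun hlt => hp ?_).1 ?_
    · exact ⟨(p.1 - p.2 - 1, p.2), Prod.ext (by simp only; omega) rfl⟩
    · convert hf using 2 with q
      exact if_pos (by simp only; omega)
  refine hg.prod_fiberwise fun n => ?_
  rw [sum_congr rfl fun t ht => (if_pos (mem_range.1 ht)).symm]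
  exact hasSum_sum_of_ne_finset_zero fun t ht => if_neg (by simpa using ht)

lemma hasSum_sub_add_of_antitone {f : ℕ → ℝ} {l : ℝ} (hf : Antitone f)
    (hl : Tendsto f atTop (𝓝 l)) (N : ℕ) :
    HasSum (fun n => f n - f (n + N)) (∑ t ∈ range N, (f t - l)) := by
  induction N with
  | zero => simp
  | succ N ih =>
    set g := fun n => f (n + N)
    have hstep : HasSum (fun n => g n - g (n + 1)) (g 0 - l) := by
      refine (hasSum_iff_tendsto_nat_of_nonneg (fun n => sub_nonneg.2 (hf (by omega))) _).2 ?_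
      simp_rw [sum_range_sub']
      exact tendsto_const_nhds.sub ((tendsto_add_atTop_iff_nat N).2 hl)
    rw [sum_range_succ]
    convert ih.add hstep using 1
    · ext n
      simp only [g, add_right_comm n 1 N, ← add_assoc]
      ring
    · simp [g]

lemma hasSum_one_div_sub_one_div_add (N : ℕ) :
    HasSum (fun n : ℕ => 1 / ((n : ℝ) + 1) - 1 / ((n : ℝ) + N + 1))
      (∑ t ∈ range N, 1 / ((t : ℝ) + 1)) := by
  have hf : Antitone fun n : ℕ => 1 / ((n : ℝ) + 1) := fun m n h => by
    dsimp only
    gcongr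
  have hl : Tendsto (fun n : ℕ => 1 / ((n : ℝ) + 1)) atTop (𝓝 0) :=
    tendsto_one_div_add_atTop_nhds_zero_nat
  simpa [add_right_comm] using hasSum_sub_add_of_antitone hf hl N

lemma summable_one_div_add_one_pow {k : ℕ} (hk : 2 ≤ k) :
    Summable fun n : ℕ => 1 / ((n : ℝ) + 1) ^ k := by
  simpa using (summable_nat_add_iff 1).2 (Real.summable_one_div_nat_pow.2 hk)

lemma rpow_three_halves_mul_le {x y : ℝ} (hx : 0 < x) (hy : 0 < y) :
    x ^ (3 / 2 : ℝ) * y ^ (3 / 2 : ℝ) ≤ x * y * (x + y) := by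
  have h32 : ∀ z : ℝ, 0 < z → z ^ (3 / 2 : ℝ) = z * √z := fun z hz => by
    rw [show (3 / 2 : ℝ) = 1 + 1 / 2 by norm_num, Real.rpow_add hz, Real.rpow_one,
      Real.sqrt_eq_rpow]
  rw [h32 x hx, h32 y hy]
  have hsx := Real.sq_sqrt hx.le
  have hsy := Real.sq_sqrt hy.le
  have : √x * √y ≤ x + y := by
    nlinarith [sq_nonneg (√x - √y), Real.sqrt_nonneg x, Real.sqrt_nonneg y]
  nlinarith [mul_pos hx hy]

lemma summable_one_div_of_le {D : ℕ × ℕ → ℝ}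
    (hD : ∀ p : ℕ × ℕ,
      ((p.1 : ℝ) + 1) * ((p.2 : ℝ) + 1) * ((p.1 : ℝ) + 1 + ((p.2 : ℝ) + 1)) ≤ D p) :
    Summable fun p => 1 / D p := by
  have h32 : Summable fun n : ℕ => 1 / ((n : ℝ) + 1) ^ (3 / 2 : ℝ) := by
    simpa using (summable_nat_add_iff 1).2 (Real.summable_one_div_nat_rpow.2 (by norm_num))
  refine (h32.mul_of_nonneg h32 (fun _ => by positivity) (fun _ => by positivity)).of_nonneg_of_le
    (fun p => one_div_nonneg.2 (le_trans (by positivity) (hD p))) fun p => ?_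
  rw [div_mul_div_comm, one_mul]
  exact one_div_le_one_div_of_le (by positivity)
    ((rpow_three_halves_mul_le (by positivity) (by positivity)).trans (hD p))

lemma hasSum_zeta {k : ℕ} (hk : 2 ≤ k) : HasSum (fun n : ℕ => 1 / ((n : ℝ) + 1) ^ k) (zeta k) :=
  (summable_one_div_add_one_pow hk).hasSum

-- The term `m⁻ᵖ n⁻ᵠ` of `zeta2 p q` at `m = x + y`, `n = y`, where `x = i.1 + 1`, `y = i.2 + 1`.
noncomputable def zeta2Term (p q : ℕ) (i : ℕ × ℕ) : ℝ :=
  1 / (((i.1 : ℝ) + 1 + ((i.2 : ℝ) + 1)) ^ p * ((i.2 : ℝ) + 1) ^ q)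

lemma summable_zeta2Term {p q : ℕ} (hp : 2 ≤ p) (hq : 1 ≤ q) : Summable (zeta2Term p q) := by
  refine summable_one_div_of_le fun i => ?_
  set x : ℝ := i.1 + 1
  set y : ℝ := i.2 + 1
  have hx : 1 ≤ x := by simp [x]
  have hy : 1 ≤ y := by simp [y]
  calc x * y * (x + y) ≤ (x + y) * y * (x + y) := by gcongr; linarith
    _ = (x + y) ^ 2 * y ^ 1 := by ring
    _ ≤ (x + y) ^ p * y ^ q := by gcongr; linarith

lemma zeta2_eq_tsum {p q : ℕ} (hp : 2 ≤ p) (hq : 1 ≤ q) :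
    zeta2 p q = ∑' i, zeta2Term p q i := by
  have h := summable_zeta2Term hp hq
  rw [h.tsum_prod' h.prod_factor, zeta2]
  congr! 4 with i j
  simp only [zeta2Term]
  ring_nf

lemma hasSum_zeta2 {p q : ℕ} (hp : 2 ≤ p) (hq : 1 ≤ q) : HasSum (zeta2Term p q) (zeta2 p q) := by
  rw [zeta2_eq_tsum hp hq]
  exact (summable_zeta2Term hp hq).hasSum

theorem zeta_mul_zeta {k l : ℕ} (hk : 2 ≤ k) (hl : 2 ≤ l) :
    zeta k * zeta l = zeta (k + l) + (zeta2 k l + zeta2 l k) := by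
  have hk' := summable_one_div_add_one_pow hk
  have hl' := summable_one_div_add_one_pow hl
  have hprod := hk'.mul_of_nonneg hl' (fun _ => by positivity) (fun _ => by positivity)
  rw [zeta, zeta, hk'.tsum_mul_tsum hl' hprod, tsum_eq_tsum_diag_add_tsum_triangles hprod,
    zeta, zeta2_eq_tsum hk (by omega), zeta2_eq_tsum hl (by omega)]
  congr 1
  · exact tsum_congr fun n => by rw [div_mul_div_comm, one_mul, pow_add]
  congr 1 <;> exact tsum_congr fun i => by simp only [zeta2Term]; push_cast; ring

lemma sum_Icc_one_div_add_pow_mul_pow {x y : ℝ} (hx : 0 < x) (hy : 0 < y) {s : ℕ} (hs : 2 ≤ s) :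
    ∑ k ∈ Icc 2 (s - 1), 1 / ((x + y) ^ k * y ^ (s + 1 - k)) =
      1 / (x * (x + y) * y ^ (s - 1)) - 1 / (x * y * (x + y) ^ (s - 1)) := by
  induction s, hs using Nat.le_induction with
  | base =>
    rw [show 2 - 1 = 1 from rfl, Icc_eq_empty (by omega), sum_empty]
    ring
  | succ s hs ih =>
    obtain ⟨t, rfl⟩ : ∃ t, s = t + 2 := ⟨s - 2, by omega⟩
    have hterm : ∀ k ∈ Icc 2 (t + 1), 1 / ((x + y) ^ k * y ^ (t + 2 + 1 + 1 - k)) =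
        1 / y * (1 / ((x + y) ^ k * y ^ (t + 2 + 1 - k))) := fun k hk => by
      have hk' := (mem_Icc.1 hk).2
      rw [show t + 2 + 1 + 1 - k = t + 2 + 1 - k + 1 by omega, pow_succ]
      field_simp
    simp only [show t + 2 + 1 - 1 = t + 1 + 1 from rfl, show t + 2 - 1 = t + 1 from rfl] at ih ⊢
    rw [sum_Icc_succ_top (by omega), sum_congr rfl hterm, ← mul_sum, ih,
      show t + 2 + 1 + 1 - (t + 1 + 1) = 2 by omega]
    field_simp
    ring

lemma hasSum_two_mul_zeta2 {s : ℕ} (hs : 2 ≤ s) :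
    HasSum (fun i : ℕ × ℕ =>
      1 / (((i.1 : ℝ) + 1) * ((i.2 : ℝ) + 1) * ((i.1 : ℝ) + 1 + ((i.2 : ℝ) + 1)) ^ (s - 1)))
      (2 * zeta2 s 1) := by
  have h := hasSum_zeta2 hs le_rfl
  have hswap : HasSum (fun i : ℕ × ℕ => zeta2Term s 1 i.swap) (zeta2 s 1) :=
    (Equiv.prodComm ℕ ℕ).hasSum_iff.2 h
  rw [two_mul]
  convert h.add hswap using 1
  ext i
  have hpow : ((i.1 : ℝ) + 1 + ((i.2 : ℝ) + 1)) ^ s =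
      ((i.1 : ℝ) + 1 + ((i.2 : ℝ) + 1)) ^ (s - 1) * ((i.1 : ℝ) + 1 + ((i.2 : ℝ) + 1)) := by
    rw [← pow_succ, Nat.sub_add_cancel (by omega)]
  simp only [zeta2Term, Prod.fst_swap, Prod.snd_swap, add_comm ((i.2 : ℝ) + 1), hpow]
  field_simp

lemma hasSum_harmonic_div_pow {s : ℕ} (hs : 1 ≤ s) (n : ℕ) :
    HasSum (fun d : ℕ =>
      1 / (((d : ℝ) + 1) * ((d : ℝ) + 1 + ((n : ℝ) + 1)) * ((n : ℝ) + 1) ^ (s - 1)))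
      ((∑ t ∈ range (n + 1), 1 / ((t : ℝ) + 1)) / ((n : ℝ) + 1) ^ s) := by
  have hpow : ((n : ℝ) + 1) ^ s = ((n : ℝ) + 1) ^ (s - 1) * ((n : ℝ) + 1) := by
    rw [← pow_succ, Nat.sub_add_cancel hs]
  have hterm : (fun d : ℕ =>
      1 / (((d : ℝ) + 1) * ((d : ℝ) + 1 + ((n : ℝ) + 1)) * ((n : ℝ) + 1) ^ (s - 1))) =
      fun d : ℕ => (1 / ((d : ℝ) + 1) - 1 / ((d : ℝ) + ↑(n + 1) + 1)) / ((n : ℝ) + 1) ^ s := by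
    ext d
    rw [hpow]
    push_cast
    field_simp
    ring
  rw [hterm]
  exact (hasSum_one_div_sub_one_div_add (n + 1)).div_const _

lemma hasSum_zeta_add_zeta2 {s : ℕ} (hs : 2 ≤ s) :
    HasSum (fun i : ℕ × ℕ =>
      1 / (((i.1 : ℝ) + 1) * ((i.1 : ℝ) + 1 + ((i.2 : ℝ) + 1)) * ((i.2 : ℝ) + 1) ^ (s - 1)))
      (zeta (s + 1) + zeta2 s 1) := by
  set F := fun i : ℕ × ℕ =>
    1 / (((i.1 : ℝ) + 1) * ((i.1 : ℝ) + 1 + ((i.2 : ℝ) + 1)) * ((i.2 : ℝ) + 1) ^ (s - 1))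
  have hF : Summable F := summable_one_div_of_le fun i => by
    have hy : (i.2 : ℝ) + 1 ≤ ((i.2 : ℝ) + 1) ^ (s - 1) :=
      le_self_pow₀ (by simp) (by omega)
    calc _ = ((i.1 : ℝ) + 1) * ((i.1 : ℝ) + 1 + ((i.2 : ℝ) + 1)) * ((i.2 : ℝ) + 1) := by ring
      _ ≤ _ := by gcongr
  have hrow (n : ℕ) : HasSum (fun d => F (d, n))
      (1 / ((n : ℝ) + 1) ^ (s + 1) + ∑ t ∈ range n, 1 / (((n : ℝ) + 1) ^ s * ((t : ℝ) + 1))) := by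
    convert hasSum_harmonic_div_pow (by omega : 1 ≤ s) n using 1
    rw [sum_range_succ, add_div, sum_div, add_comm, pow_succ]
    congr 1
    · exact sum_congr rfl fun t _ => by field_simp
    · field_simp
  have htriangle : HasSum (fun n => ∑ t ∈ range n, 1 / (((n : ℝ) + 1) ^ s * ((t : ℝ) + 1)))
      (zeta2 s 1) := by
    refine hasSum_sum_range_of_hasSum
      (f := fun p : ℕ × ℕ => 1 / (((p.1 : ℝ) + 1) ^ s * ((p.2 : ℝ) + 1))) ?_
    convert hasSum_zeta2 hs le_rfl using 2 with i
    simp only [zeta2Term]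
    push_cast
    ring
  have hsum := ((Equiv.prodComm ℕ ℕ).hasSum_iff.2 hF.hasSum).prod_fiberwise hrow
  exact hsum.unique ((hasSum_zeta (by omega)).add htriangle) ▸ hF.hasSum

lemma sum_Icc_zeta2 {s : ℕ} (hs : 2 ≤ s) :
    ∑ k ∈ Icc 2 (s - 1), zeta2 k (s + 1 - k) = zeta (s + 1) - zeta2 s 1 := by
  have hterms : ∀ k ∈ Icc 2 (s - 1), HasSum (zeta2Term k (s + 1 - k)) (zeta2 k (s + 1 - k)) :=
    fun k hk => hasSum_zeta2 (mem_Icc.1 hk).1 (by grind)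
  have hsplit : (fun i => ∑ k ∈ Icc 2 (s - 1), zeta2Term k (s + 1 - k) i) = fun i : ℕ × ℕ =>
      1 / (((i.1 : ℝ) + 1) * ((i.1 : ℝ) + 1 + ((i.2 : ℝ) + 1)) * ((i.2 : ℝ) + 1) ^ (s - 1)) -
      1 / (((i.1 : ℝ) + 1) * ((i.2 : ℝ) + 1) * ((i.1 : ℝ) + 1 + ((i.2 : ℝ) + 1)) ^ (s - 1)) :=
    funext fun i => sum_Icc_one_div_add_pow_mul_pow (by positivity) (by positivity) hs
  have hsum := hasSum_sum hterms
  rw [hsplit] at hsum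
  rw [hsum.unique ((hasSum_zeta_add_zeta2 hs).sub (hasSum_two_mul_zeta2 hs))]
  ring

lemma sum_Icc_zeta2_reflect {s : ℕ} :
    ∑ k ∈ Icc 2 (s - 1), zeta2 (s + 1 - k) k = ∑ k ∈ Icc 2 (s - 1), zeta2 k (s + 1 - k) := by
  refine sum_nbij' (fun k => s + 1 - k) (fun k => s + 1 - k) ?_ ?_ ?_ ?_ ?_ <;>
    intro k hk <;> simp only [mem_Icc] at hk ⊢
  all_goals first | omega | rw [Nat.sub_sub_self (by omega)]

theorem sum_Icc_zeta_mul_zeta {s : ℕ} (hs : 2 ≤ s) :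
    ∑ k ∈ Icc 2 (s - 1), zeta k * zeta (s + 1 - k) = s * zeta (s + 1) - 2 * zeta2 s 1 := by
  calc ∑ k ∈ Icc 2 (s - 1), zeta k * zeta (s + 1 - k)
      = ∑ k ∈ Icc 2 (s - 1), (zeta (s + 1) + (zeta2 k (s + 1 - k) + zeta2 (s + 1 - k) k)) :=
        sum_congr rfl fun k hk => by
          rw [zeta_mul_zeta (mem_Icc.1 hk).1 (by grind), Nat.add_sub_cancel' (by grind)]
    _ = (s - 2) * zeta (s + 1) + 2 * ∑ k ∈ Icc 2 (s - 1), zeta2 k (s + 1 - k) := by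
        rw [sum_add_distrib, sum_add_distrib, sum_Icc_zeta2_reflect, sum_const, Nat.card_Icc,
          nsmul_eq_mul, show s - 1 + 1 - 2 = s - 2 by omega, Nat.cast_sub hs]
        push_cast
        ring
    _ = s * zeta (s + 1) - 2 * zeta2 s 1 := by
        rw [sum_Icc_zeta2 hs]
        ring

end EulerZeta2

theorem stmt11 (s : ℕ) (hs : 1 < s) :
    zeta2 s 1 = (s : ℝ) / 2 * zeta (s + 1)
      - 1 / 2 * ∑ k ∈ Finset.Icc 2 (s - 1), zeta k * zeta (s + 1 - k) := by
  rw [EulerZeta2.sum_Icc_zeta_mul_zeta hs]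
  ring
end
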